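/- For any planar binary trees t and s, t/s ≤ t\s in the Tamari order, where t/s is obtained by grafting the root of t onto the leftmost leaf of s and t\s is obtained by grafting the root of s onto the rightmost leaf of t. -/

import Mathlib

/-- Planar binary rooted trees: either the trivial tree `leaf` (drawn `|`)
or the grafting `node l r = l ∨ r` of two trees. -/
inductive PBT : Type
  | leaf : PBT
  | node : PBT → PBT → PBT
deriving DecidableEq

namespace PBT

/-- Number of internal vertices of a tree. -/
def size : PBT → ℕ
  | leaf => 0
  | node l r => l.size + r.size + 1

/-- The dendriform sum of two trees, a set of trees:
`s + t = (s ⊣ t) ∪ (s ⊢ t)` with `s ⊣ t = sˡ ∨ (sʳ + t)`, `s ⊢ t = (s + tˡ) ∨ tʳ`,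
and the trivial tree acting as neutral element. -/
def addT : PBT → PBT → Set PBT
  | leaf, t => {t}
  | node l r, leaf => {node l r}
  | node l r, node l' r' =>
      (fun x => node l x) '' addT r (node l' r') ∪
      (fun x => node x r') '' addT (node l r) l'
termination_by s t => s.size + t.size
decreasing_by all_goals (simp [size] <;> omega)

/-- The left operation `s ⊣ t := sˡ ∨ (sʳ + t)` on trees (with `s ⊣ | = s`),
valued in sets of trees. -/
def leftT : PBT → PBT → Set PBT
  | leaf, _ => ∅
  | node l r, leaf => {node l r}
  | node l r, node l' r' => (fun x => node l x) '' addT r (node l' r')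

/-- The right operation `s ⊢ t := (s + tˡ) ∨ tʳ` on trees (with `| ⊢ t = t`),
valued in sets of trees. -/
def rightT : PBT → PBT → Set PBT
  | _, leaf => ∅
  | leaf, t => {t}
  | node l r, node l' r' => (fun x => node x r') '' addT (node l r) l'

/-- Elementwise extension of `⊣` to sets of trees. -/
def leftS (S T : Set PBT) : Set PBT := ⋃ s ∈ S, ⋃ t ∈ T, leftT s t

/-- Elementwise extension of `⊢` to sets of trees. -/
def rightS (S T : Set PBT) : Set PBT := ⋃ s ∈ S, ⋃ t ∈ T, rightT s t

/-- Elementwise extension of the sum `+` to sets of trees: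
`S + T = (S ⊣ T) ∪ (S ⊢ T)`. -/
def addS (S T : Set PBT) : Set PBT := ⋃ s ∈ S, ⋃ t ∈ T, addT s t

/-- A nonempty finite set of nontrivial trees. -/
def Good (S : Set PBT) : Prop := S.Nonempty ∧ S.Finite ∧ ∀ t ∈ S, t ≠ leaf

end PBT

namespace PBT

/-- One covering relation of the Tamari order: a single right rotation
`(a ∨ b) ∨ c ⟶ a ∨ (b ∨ c)` performed somewhere inside a tree. -/
inductive Rot : PBT → PBT → Prop
  | rotate (a b c : PBT) : Rot (node (node a b) c) (node a (node b c))
  | left {l l' : PBT} (r : PBT) : Rot l l' → Rot (node l r) (node l' r)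
  | right (l : PBT) {r r' : PBT} : Rot r r' → Rot (node l r) (node l r')

/-- The Tamari order: the partial order generated by the rotation covering
relations. -/
def TamariLE : PBT → PBT → Prop := Relation.ReflTransGen Rot

/-- `over t s = t/s`: graft the root of `t` on the leftmost leaf of `s`. -/
def overT (t : PBT) : PBT → PBT
  | leaf => t
  | node l r => node (overT t l) r

/-- `under t s = t\s`: graft the root of `s` on the rightmost leaf of `t`. -/
def under : PBT → PBT → PBT
  | leaf, s => s
  | node l r, s => node l (under r s)

end PBT

namespace PBT

theorem tamariLE_node_left {l l' : PBT} (r : PBT) (h : TamariLE l l') :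
    TamariLE (node l r) (node l' r) := by
  induction h with
  | refl => exact Relation.ReflTransGen.refl
  | tail _ h ih => exact ih.tail (Rot.left r h)

theorem tamariLE_node_right (l : PBT) {r r' : PBT} (h : TamariLE r r') :
    TamariLE (node l r) (node l r') := by
  induction h with
  | refl => exact Relation.ReflTransGen.refl
  | tail _ h ih => exact ih.tail (Rot.right l h)

theorem over_leaf (s : PBT) : overT leaf s = s := by
  induction s with
  | leaf => rfl
  | node l r ih => simp [overT, ih]

theorem over_node_tamariLE (u v s : PBT) :
    TamariLE (overT (node u v) s) (node u (overT v s)) := by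
  induction s with
  | leaf => exact Relation.ReflTransGen.refl
  | node l r ih =>
    exact (tamariLE_node_left r ih).tail (Rot.rotate u (overT v l) r)

end PBT

open PBT in
/-- For any planar binary trees `t` and `s`, `t/s ≤ t\s` in the Tamari order. -/
theorem over_tamariLE_under (t s : PBT) : TamariLE (overT t s) (under t s) := by
  induction t generalizing s with
  | leaf => rw [over_leaf]; exact Relation.ReflTransGen.refl
  | node a b iha ihb =>
    exact (over_node_tamariLE a b s).trans (tamariLE_node_right a (ihb s))
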